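/- arXiv:2405.09011 — 4 statements merged into one kernel-verified Lean document; each statement's English description precedes it below -/
import Mathlib

section
/- For every integer n ≥ 2 and every n-vertex finite simple graph G, there exists a finite simple graph G' with fewer than n² vertices such that G' has sd-degeneracy at most 1 and G is an induced subgraph of G'. -/
open scoped symmDiff

/-- `sdAt G u v` is the number of vertices outside `{u, v}` adjacent to exactly one of `u, v`. -/
noncomputable def sdAt {V : Type*} (G : SimpleGraph V) (u v : V) : ℕ :=
  ((G.neighborSet u \ {v}) ∆ (G.neighborSet v \ {u})).ncard

/-- `G` has sd-degeneracy at most `d`: either it has a single vertex, or there is an ordering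
`v_1, …, v_n` of the vertices such that each `v_i` (for `i < n`) has a `d`-twin among
`v_{i+1}, …, v_n` in the subgraph induced by `{v_i, …, v_n}`. -/
def SddLE {V : Type*} [Fintype V] (G : SimpleGraph V) (d : ℕ) : Prop :=
  Fintype.card V = 1 ∨
  ∃ e : Fin (Fintype.card V) ≃ V,
    ∀ i : Fin (Fintype.card V), (i : ℕ) < Fintype.card V - 1 →
      ∃ j : Fin (Fintype.card V), ∃ hij : i < j,
        sdAt (G.induce {x | ∃ k, i ≤ k ∧ e k = x})
          ⟨e i, ⟨i, le_refl i, rfl⟩⟩ ⟨e j, ⟨j, le_of_lt hij, rfl⟩⟩ ≤ d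

/-!
Lay out the vertices of `G` as `v₀, …, v_{n-1}` and put behind each `vᵢ` with `i < n - 1` a chain
of auxiliary vertices `c_{i,1}, …, c_{i,n-1}`, where `c_{i,j}` is adjacent exactly to the `v_k` with
`k > i`, `k ≥ j` and `v_k ~ vᵢ`. This gives `(n - 1) * n + 1 < n²` vertices, and `G` is induced on
the `vᵢ`. Delete the vertices in the order `v₀, c_{0,1}, …, c_{0,n-1}, v₁, …`. When `vᵢ = c_{i,0}`
or `c_{i,j}` is deleted only later vertices remain, so its neighbourhood is
`{v_k | k > i, k ≥ j, v_k ~ vᵢ}`, which differs from that of `c_{i,j+1}` at most in `v_j`.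
The last vertex `c_{i,n-1}` of a chain can only see `v_{n-1}`, so it is a 1-twin of `c_{i+1,n-1}`,
or of `v_{n-1}` itself when only these two vertices are left.
-/

section SdDegeneracy

variable {V : Type*} {G : SimpleGraph V}

lemma sdAt_eq_ncard (u v : V) :
    sdAt G u v = {w | w ≠ u ∧ w ≠ v ∧ ¬(G.Adj u w ↔ G.Adj v w)}.ncard := by
  rw [sdAt]
  congr 1
  ext w
  simp only [Set.mem_symmDiff, Set.mem_sdiff, SimpleGraph.mem_neighborSet,
    Set.mem_singleton_iff, Set.mem_ofPred_eq]
  have hu := fun h : G.Adj u w => h.ne'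
  have hv := fun h : G.Adj v w => h.ne'
  tauto

lemma sdAt_induce_eq_ncard (S : Set V) (u v : S) :
    sdAt (G.induce S) u v =
      {w | w ∈ S ∧ w ≠ u ∧ w ≠ v ∧ ¬(G.Adj u w ↔ G.Adj v w)}.ncard := by
  rw [sdAt_eq_ncard, ← Set.ncard_image_of_injective _ Subtype.val_injective]
  congr 1
  ext w
  simp only [ne_eq, Subtype.ext_iff, SimpleGraph.comap_adj, Function.Embedding.subtype_apply,
    Set.mem_image, Set.mem_ofPred_eq, Subtype.exists, exists_and_left, exists_prop,
    exists_eq_right_right, Set.sep_and, Set.mem_inter_iff]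
  tauto

/-- `x` has a `d`-twin among the larger vertices, in the subgraph induced on `{w | x ≤ w}`. -/
def HasUpperTwin [LinearOrder V] (G : SimpleGraph V) (d : ℕ) (x : V) : Prop :=
  ∃ z, x < z ∧ {w | x < w ∧ w ≠ z ∧ ¬(G.Adj x w ↔ G.Adj z w)}.ncard ≤ d

lemma sddLE_of_forall_hasUpperTwin [Fintype V] [LinearOrder V] {d : ℕ}
    (h : ∀ x y : V, x < y → HasUpperTwin G d x) : SddLE G d := by
  by_cases hV : Fintype.card V = 1
  · exact Or.inl hV
  right
  set e := Fintype.orderIsoFinOfCardEq V rfl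
  refine ⟨e.toEquiv, fun i hi => ?_⟩
  obtain ⟨z, hiz, hz⟩ := h (e i) (e ⟨Fintype.card V - 1, by omega⟩) (e.lt_iff_lt.2 hi)
  refine ⟨e.symm z, e.lt_symm_apply.2 hiz, ?_⟩
  have mem_upper : ∀ w, (∃ k, i ≤ k ∧ e k = w) ↔ e i ≤ w := fun w =>
    ⟨by rintro ⟨k, hk, rfl⟩; exact e.monotone hk,
      fun hw => ⟨e.symm w, e.le_symm_apply.2 hw, e.apply_symm_apply w⟩⟩
  rw [sdAt_induce_eq_ncard]
  convert hz using 3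
  funext w
  simp only [OrderIso.coe_toEquiv, mem_upper, Set.mem_ofPred_eq, OrderIso.apply_symm_apply,
    lt_iff_le_and_ne, ne_comm (a := e i), and_assoc]

end SdDegeneracy

section Supergraph

variable (n : ℕ) (G : SimpleGraph ℕ)

/-- The number `p` encodes the vertex in block `p / n` at offset `p % n`: offset `0` is the vertex
`v_{p / n}` of `G`, offset `j > 0` is the auxiliary vertex `c_{p / n, j}`. -/
def supergraphRel (p q : ℕ) : Prop :=
  q % n = 0 ∧ p % n ≤ q / n ∧ p / n < q / n ∧ G.Adj (q / n) (p / n)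

def supergraph : SimpleGraph ℕ := SimpleGraph.fromRel (supergraphRel n G)

variable {n G}

lemma supergraph_adj_of_lt {p q : ℕ} (hpq : p < q) :
    (supergraph n G).Adj p q ↔ supergraphRel n G p q := by
  rw [supergraph, SimpleGraph.fromRel_adj]
  refine ⟨fun ⟨_, h⟩ => h.resolve_right fun h' => ?_, fun h => ⟨hpq.ne, Or.inl h⟩⟩
  exact absurd (Nat.div_le_div_right hpq.le) (not_le.2 h'.2.2.1)

lemma supergraphRel_of_adj {p q : ℕ} (hp : p % n ≠ 0) (h : (supergraph n G).Adj p q) :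
    supergraphRel n G p q := by
  rw [supergraph, SimpleGraph.fromRel_adj] at h
  exact h.2.resolve_right fun h' => hp h'.1

lemma supergraph_adj_mul_mul (hn : 0 < n) {a b : ℕ} :
    (supergraph n G).Adj (a * n) (b * n) ↔ G.Adj a b := by
  simp only [supergraph, SimpleGraph.fromRel_adj, supergraphRel, Nat.mul_mod_left,
    Nat.mul_div_cancel _ hn, Nat.zero_le, true_and, ne_eq, Nat.mul_left_inj hn.ne']
  constructor
  · rintro ⟨-, ⟨-, h⟩ | ⟨-, h⟩⟩
    exacts [h.symm, h]
  · intro h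
    rcases h.ne.lt_or_gt with hab | hab
    exacts [⟨h.ne, Or.inl ⟨hab, h.symm⟩⟩, ⟨h.ne, Or.inr ⟨hab, h⟩⟩]

lemma supergraph_adj_iff_adj_succ {p w : ℕ} (hp : p % n + 1 < n) (hw : p + 1 < w)
    (hw' : w ≠ p % n * n) : (supergraph n G).Adj p w ↔ (supergraph n G).Adj (p + 1) w := by
  have hsucc : p + 1 = n * (p / n) + (p % n + 1) := by rw [← add_assoc, Nat.div_add_mod]
  have hmod : (p + 1) % n = p % n + 1 := by
    rw [hsucc, Nat.mul_add_mod, Nat.mod_eq_of_lt hp]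
  have hdiv : (p + 1) / n = p / n := by
    rw [hsucc, Nat.mul_add_div (by omega), Nat.div_eq_of_lt hp, add_zero]
  rw [supergraph_adj_of_lt (by omega), supergraph_adj_of_lt hw, supergraphRel, supergraphRel,
    hmod, hdiv]
  refine and_congr_right fun hw0 => ⟨fun ⟨h1, h2⟩ => ⟨?_, h2⟩, fun ⟨h1, h2⟩ => ⟨by omega, h2⟩⟩
  refine Nat.lt_of_le_of_ne h1 fun h => hw' ?_
  rw [h, Nat.div_mul_cancel (Nat.dvd_of_mod_eq_zero hw0)]

end Supergraph

section FinSupergraph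

variable {n : ℕ} {G : SimpleGraph (Fin n)}

variable (n) in
/-- The last block consists of `v_{n-1}` alone, at position `(n - 1) * n`. -/
def finSupergraph (G : SimpleGraph (Fin n)) : SimpleGraph (Fin ((n - 1) * n + 1)) :=
  (supergraph n (G.map Fin.valEmbedding)).comap Fin.val

def finSupergraphEmbedding (hn : 0 < n) (G : SimpleGraph (Fin n)) : G ↪g finSupergraph n G where
  toFun v := ⟨v * n, Nat.lt_succ_of_le (Nat.mul_le_mul_right n (Nat.le_sub_one_of_lt v.2))⟩
  inj' _ _ h := Fin.ext (Nat.eq_of_mul_eq_mul_right hn (Fin.val_eq_of_eq h))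
  map_rel_iff' := (supergraph_adj_mul_mul hn).trans SimpleGraph.map_adj_apply

lemma finSupergraph_adj_eq_last (hn : 2 ≤ n) {a w : Fin ((n - 1) * n + 1)}
    (ha : a.val % n = n - 1) (h : (finSupergraph n G).Adj a w) : w.val = (n - 1) * n := by
  obtain ⟨-, hle, -⟩ := supergraphRel_of_adj (by omega) h
  rw [ha] at hle
  exact le_antisymm (Nat.lt_succ_iff.1 w.isLt)
    ((Nat.mul_le_mul_right n hle).trans (Nat.div_mul_le_self _ _))

lemma hasUpperTwin_finSupergraph_of_mod_lt {x : Fin ((n - 1) * n + 1)}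
    (hx : x.val < (n - 1) * n) (hmod : x.val % n + 1 < n) :
    HasUpperTwin (finSupergraph n G) 1 x := by
  refine ⟨⟨x + 1, by omega⟩, Fin.lt_def.2 (Nat.lt_succ_self _),
    Set.ncard_le_one_iff_subsingleton.2 ?_⟩
  suffices key : ∀ w ∈ {w | x < w ∧ w ≠ ⟨x + 1, by omega⟩ ∧
      ¬((finSupergraph n G).Adj x w ↔ (finSupergraph n G).Adj ⟨x + 1, by omega⟩ w)},
      w.val = x.val % n * n from
    fun a ha b hb => Fin.ext ((key a ha).trans (key b hb).symm)
  rintro w ⟨hxw, hw, hadj⟩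
  by_contra hc
  exact hadj (supergraph_adj_iff_adj_succ hmod
    (lt_of_le_of_ne (Fin.lt_def.1 hxw) fun h => hw (Fin.ext h.symm)) hc)

lemma hasUpperTwin_finSupergraph_of_mod_eq (hn : 2 ≤ n) {x : Fin ((n - 1) * n + 1)}
    (hx : x.val < (n - 1) * n) (hmod : x.val % n = n - 1) :
    HasUpperTwin (finSupergraph n G) 1 x := by
  by_cases hlast : x.val + 1 = (n - 1) * n
  · refine ⟨⟨(n - 1) * n, by omega⟩, Fin.lt_def.2 (by simp; omega),
      Set.ncard_le_one_iff_subsingleton.2 ?_⟩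
    rintro w ⟨hxw, hw, -⟩
    refine (hw (Fin.ext ?_)).elim
    have := w.isLt
    have := Fin.lt_def.1 hxw
    simp only
    omega
  have hdvd : n ∣ x.val + 1 := by
    rw [Nat.dvd_iff_mod_eq_zero, Nat.add_mod, hmod, Nat.mod_eq_of_lt (by omega : 1 < n),
      Nat.sub_add_cancel (by omega), Nat.mod_self]
  have hxn : x.val + n ≤ (n - 1) * n := by
    have := Nat.le_of_dvd (by omega) (Nat.dvd_sub (dvd_mul_left n (n - 1)) hdvd)
    omega
  have hmod' : (x.val + n) % n = n - 1 := by rw [Nat.add_mod_right, hmod]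
  refine ⟨⟨x + n, by omega⟩, Fin.lt_def.2 (by simp; omega),
    Set.ncard_le_one_iff_subsingleton.2 ?_⟩
  suffices key : ∀ w ∈ {w | x < w ∧ w ≠ ⟨x + n, by omega⟩ ∧
      ¬((finSupergraph n G).Adj x w ↔ (finSupergraph n G).Adj ⟨x + n, by omega⟩ w)},
      w.val = (n - 1) * n from
    fun a ha b hb => Fin.ext ((key a ha).trans (key b hb).symm)
  rintro w ⟨-, -, hadj⟩
  by_cases h : (finSupergraph n G).Adj x w
  · exact finSupergraph_adj_eq_last hn hmod h
  · exact finSupergraph_adj_eq_last hn (a := ⟨x + n, by omega⟩) hmod' ((not_iff.1 hadj).1 h)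

lemma sddLE_finSupergraph (hn : 2 ≤ n) (G : SimpleGraph (Fin n)) :
    SddLE (finSupergraph n G) 1 := by
  refine sddLE_of_forall_hasUpperTwin fun x y hxy => ?_
  have hx : x.val < (n - 1) * n := by have := y.isLt; omega
  by_cases hmod : x.val % n + 1 < n
  · exact hasUpperTwin_finSupergraph_of_mod_lt hx hmod
  · have := Nat.mod_lt x.val (by omega : 0 < n)
    exact hasUpperTwin_finSupergraph_of_mod_eq hn hx (by omega)

end FinSupergraph

theorem exists_sddLE_one_superGraph (n : ℕ) (hn : 2 ≤ n) (G : SimpleGraph (Fin n)) :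
    ∃ m : ℕ, m < n ^ 2 ∧ ∃ G' : SimpleGraph (Fin m), SddLE G' 1 ∧ Nonempty (G ↪g G') := by
  refine ⟨(n - 1) * n + 1, ?_, finSupergraph n G, sddLE_finSupergraph hn G,
    ⟨finSupergraphEmbedding (by omega) G⟩⟩
  zify [show 1 ≤ n by omega]
  nlinarith
end

section
/- Every finite simple graph of degeneracy at most d has symmetric difference at most 2d. -/
open scoped symmDiff

/-- `G` has degeneracy at most `d`: every nonempty (induced) subgraph has a vertex of degree
at most `d`. -/
def DegenLE {V : Type*} (G : SimpleGraph V) (d : ℕ) : Prop :=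
  ∀ s : Set V, s.Nonempty → ∃ v ∈ s, (G.neighborSet v ∩ s).ncard ≤ d

/-- The symmetric difference of `G`: the maximum over induced subgraphs `H` with at least two
vertices of the minimum of `sdAt H u v` over pairs of distinct vertices of `H`. -/
noncomputable def sdNum {V : Type*} [Fintype V] (G : SimpleGraph V) : ℕ :=
  sSup {k | ∃ s : Set V, 2 ≤ s.ncard ∧
    k = sInf {m | ∃ u v : ↥s, u ≠ v ∧ m = sdAt (G.induce s) u v}}

theorem sdNum_le_of_degenLE {V : Type*} [Fintype V] (G : SimpleGraph V) (d : ℕ)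
    (h : DegenLE G d) : sdNum G ≤ 2 * d := by
  apply csSup_le'
  rintro k ⟨s, hs2, rfl⟩
  obtain ⟨u, hu, hdu⟩ := h s (Set.nonempty_of_ncard_ne_zero (show s.ncard ≠ 0 by omega))
  have hne : (s \ {u}).Nonempty := by
    obtain ⟨b, hb, hbu⟩ := Set.exists_ne_of_one_lt_ncard (s := s) (by omega) u
    exact ⟨b, hb, hbu⟩
  obtain ⟨v, hv, hdv⟩ := h (s \ {u}) hne
  have hvs : v ∈ s := hv.1
  have hvu : v ≠ u := hv.2
  refine le_trans (Nat.sInf_le ⟨⟨u, hu⟩, ⟨v, hvs⟩, by simpa using hvu.symm, rfl⟩) ?_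
  -- bound sdAt
  unfold sdAt
  set A : Set ↥s := (G.induce s).neighborSet ⟨u, hu⟩ \ {⟨v, hvs⟩} with hA
  set B : Set ↥s := (G.induce s).neighborSet ⟨v, hvs⟩ \ {⟨u, hu⟩} with hB
  have hsub : A ∆ B ⊆ A ∪ B := symmDiff_le_sup
  have h1 : A.ncard ≤ d := by
    have himg : Subtype.val '' A ⊆ G.neighborSet u ∩ s := by
      rintro x ⟨⟨w, hw⟩, hwA, rfl⟩
      exact ⟨hwA.1, hw⟩
    calc A.ncard = (Subtype.val '' A).ncard :=
          (Set.ncard_image_of_injective A Subtype.val_injective).symm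
      _ ≤ (G.neighborSet u ∩ s).ncard := Set.ncard_le_ncard himg (Set.toFinite _)
      _ ≤ d := hdu
  have h2 : B.ncard ≤ d := by
    have himg : Subtype.val '' B ⊆ G.neighborSet v ∩ (s \ {u}) := by
      rintro x ⟨⟨w, hw⟩, hwB, rfl⟩
      refine ⟨hwB.1, hw, ?_⟩
      simp only [Set.mem_singleton_iff]
      intro hwu
      exact hwB.2 (by simp only [Set.mem_singleton_iff]; exact Subtype.ext hwu)
    calc B.ncard = (Subtype.val '' B).ncard :=
          (Set.ncard_image_of_injective B Subtype.val_injective).symm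
      _ ≤ (G.neighborSet v ∩ (s \ {u})).ncard := Set.ncard_le_ncard himg (Set.toFinite _)
      _ ≤ d := hdv
  calc (A ∆ B).ncard ≤ (A ∪ B).ncard := Set.ncard_le_ncard hsub (Set.toFinite _)
    _ ≤ A.ncard + B.ncard := Set.ncard_union_le A B
    _ ≤ 2 * d := by omega
end

section
/- For every integer n, the shift graph S_n has symmetric difference at most 2, i.e., sd(S_n) ≤ 2. -/
open scoped symmDiff

/-- The shift graph `S_n`: vertices are pairs `(i, j)` with `i < j` (of `[n]`), and distinct
vertices `(i, j)` and `(k, ℓ)` are adjacent whenever `j = k` or `ℓ = i`. -/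
def shiftGraph (n : ℕ) : SimpleGraph {p : Fin n × Fin n // p.1 < p.2} where
  Adj u v := u ≠ v ∧ (u.1.2 = v.1.1 ∨ v.1.2 = u.1.1)
  symm := ⟨by rintro u v ⟨h1, h2⟩; exact ⟨h1.symm, h2.symm⟩⟩
  loopless := ⟨fun u h => h.1 rfl⟩

/-!
Every induced subgraph of `S_n` is the graph on a finite family of arcs `i → j` with `i < j`, two
arcs being adjacent when they are consecutive. In such a family there are always two arcs `u ≠ v`
with at most two vertices telling them apart:
* if two arcs share a tail, let `a` be the largest such tail and `u = (a, b)`, `v = (a, c)`. The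
  arcs entering `a` are common neighbours, so only arcs leaving `b` or `c` distinguish `u` and `v`,
  and as `b, c > a` there is at most one of each;
* if two arcs share a head, the same argument applies to the reversed order;
* otherwise tails and heads are injective. An arc `u` with largest head has at most one
  neighbour, an arc `v` entering its tail (or any arc, if there is none), and `v` itself has at most
  two neighbours.
-/

theorem sdAt_le_two_of_subset_union {V : Type*} [Finite V] {G : SimpleGraph V} {u v : V}
    {A B : Set V} (h : (G.neighborSet u \ {v}) ∆ (G.neighborSet v \ {u}) ⊆ A ∪ B)
    (hA : A.Subsingleton) (hB : B.Subsingleton) : sdAt G u v ≤ 2 :=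
  calc sdAt G u v ≤ (A ∪ B).ncard := Set.ncard_le_ncard h
    _ ≤ A.ncard + B.ncard := Set.ncard_union_le A B
    _ ≤ 1 + 1 := add_le_add (Set.ncard_le_one_iff_subsingleton.2 hA)
        (Set.ncard_le_one_iff_subsingleton.2 hB)

theorem sdNum_le_of_forall_exists_sdAt_le {V : Type*} [Fintype V] (G : SimpleGraph V) (k : ℕ)
    (h : ∀ s : Set V, 2 ≤ s.ncard → ∃ u v : s, u ≠ v ∧ sdAt (G.induce s) u v ≤ k) :
    sdNum G ≤ k := by
  refine csSup_le' ?_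
  rintro _ ⟨s, hs, rfl⟩
  obtain ⟨u, v, huv, hle⟩ := h s hs
  exact (Nat.sInf_le (show _ ∈ {m | ∃ u v : s, u ≠ v ∧ m = sdAt (G.induce s) u v} from
    ⟨u, v, huv, rfl⟩)).trans hle

def arcLineGraph {α β : Type*} (tl hd : α → β) : SimpleGraph α :=
  SimpleGraph.fromRel fun u v => hd u = tl v

section ArcLineGraph

variable {α β : Type*} (tl hd : α → β)

theorem arcLineGraph_adj {u v : α} :
    (arcLineGraph tl hd).Adj u v ↔ u ≠ v ∧ (hd u = tl v ∨ hd v = tl u) :=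
  SimpleGraph.fromRel_adj _ u v

theorem arcLineGraph_comm : arcLineGraph hd tl = arcLineGraph tl hd := by
  ext u v
  simp only [arcLineGraph_adj, eq_comm (a := tl _), or_comm]

theorem neighborSet_arcLineGraph_subset (w : α) :
    (arcLineGraph tl hd).neighborSet w ⊆ tl ⁻¹' {hd w} ∪ hd ⁻¹' {tl w} := by
  intro x hx
  obtain ⟨-, h | h⟩ := (arcLineGraph_adj tl hd).1 hx
  exacts [Or.inl h.symm, Or.inr h]

/-- Arcs with a common tail have the same in-neighbours. -/
theorem diff_neighborSet_arcLineGraph_subset {u v : α} (h : tl u = tl v) :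
    ((arcLineGraph tl hd).neighborSet u \ {v}) \ ((arcLineGraph tl hd).neighborSet v \ {u}) ⊆
      tl ⁻¹' {hd u} := by
  rintro w ⟨⟨⟨hne, hw | hw⟩, hwv⟩, hnot⟩
  · exact hw.symm
  · exact absurd ⟨⟨Ne.symm hwv, Or.inr (hw.trans h)⟩, hne.symm⟩ hnot

variable [Finite α] [LinearOrder β] {tl hd}

theorem exists_sdAt_arcLineGraph_le_two_of_not_injective_tail (hlt : ∀ w, tl w < hd w)
    (htl : ¬ tl.Injective) : ∃ u v, u ≠ v ∧ sdAt (arcLineGraph tl hd) u v ≤ 2 := by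
  let repeated : Set α := {w | ∃ v, v ≠ w ∧ tl v = tl w}
  have hrep : repeated.Nonempty := by
    obtain ⟨u, v, huv, hne⟩ := Function.not_injective_iff.1 htl
    exact ⟨v, u, hne, huv⟩
  obtain ⟨u, ⟨v, hvu, hv⟩, hmax⟩ := repeated.exists_max_image tl repeated.toFinite hrep
  have hsub : ∀ b, tl u < b → (tl ⁻¹' {b}).Subsingleton := by
    intro b hb x hx y hy
    by_contra hxy
    exact (hmax x ⟨y, Ne.symm hxy, hy.trans hx.symm⟩).not_gt (hx ▸ hb)
  refine ⟨u, v, hvu.symm, sdAt_le_two_of_subset_union (A := tl ⁻¹' {hd u})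
    (B := tl ⁻¹' {hd v}) ?_ (hsub _ (hlt u)) (hsub _ (hv ▸ hlt v))⟩
  rw [Set.symmDiff_def]
  exact Set.union_subset_union (diff_neighborSet_arcLineGraph_subset tl hd hv.symm)
    (diff_neighborSet_arcLineGraph_subset tl hd hv)

theorem exists_sdAt_arcLineGraph_le_two_of_not_injective_head (hlt : ∀ w, tl w < hd w)
    (hhd : ¬ hd.Injective) : ∃ u v, u ≠ v ∧ sdAt (arcLineGraph tl hd) u v ≤ 2 := by
  rw [← arcLineGraph_comm]
  exact exists_sdAt_arcLineGraph_le_two_of_not_injective_tail (β := βᵒᵈ) hlt hhd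

theorem exists_sdAt_arcLineGraph_le_two_of_injective [Nontrivial α] (hlt : ∀ w, tl w < hd w)
    (htl : tl.Injective) (hhd : hd.Injective) :
    ∃ u v, u ≠ v ∧ sdAt (arcLineGraph tl hd) u v ≤ 2 := by
  set G := arcLineGraph tl hd
  obtain ⟨u, humax⟩ := Finite.exists_max hd
  have hNu : (G.neighborSet u).Subsingleton := by
    refine ((Set.subsingleton_singleton (a := tl u)).preimage hhd).anti fun w hw => ?_
    rcases neighborSet_arcLineGraph_subset tl hd u hw with hw | hw
    · exact absurd (humax w) (not_le.2 (hw ▸ hlt w))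
    · exact hw
  obtain ⟨v, hvu, hNuv⟩ : ∃ v, v ≠ u ∧ G.neighborSet u ⊆ {v} := by
    rcases (G.neighborSet u).eq_empty_or_nonempty with h | ⟨v, hv⟩
    · obtain ⟨v, hv⟩ := exists_ne u
      exact ⟨v, hv, h ▸ Set.empty_subset _⟩
    · exact ⟨v, (G.ne_of_adj hv).symm, fun w hw => hNu hw hv⟩
  refine ⟨u, v, hvu.symm, sdAt_le_two_of_subset_union (A := tl ⁻¹' {hd v})
    (B := hd ⁻¹' {tl v}) ?_ (Set.subsingleton_singleton.preimage htl)
    (Set.subsingleton_singleton.preimage hhd)⟩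
  rw [Set.sdiff_eq_empty.2 hNuv, ← Set.bot_eq_empty, bot_symmDiff]
  exact Set.sdiff_subset.trans (neighborSet_arcLineGraph_subset tl hd v)

theorem exists_sdAt_arcLineGraph_le_two [Nontrivial α] (hlt : ∀ w, tl w < hd w) :
    ∃ u v, u ≠ v ∧ sdAt (arcLineGraph tl hd) u v ≤ 2 := by
  by_cases htl : tl.Injective
  · by_cases hhd : hd.Injective
    · exact exists_sdAt_arcLineGraph_le_two_of_injective hlt htl hhd
    · exact exists_sdAt_arcLineGraph_le_two_of_not_injective_head hlt hhd
  · exact exists_sdAt_arcLineGraph_le_two_of_not_injective_tail hlt htl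

end ArcLineGraph

theorem induce_shiftGraph_eq_arcLineGraph (n : ℕ) (s : Set {p : Fin n × Fin n // p.1 < p.2}) :
    (shiftGraph n).induce s = arcLineGraph (fun w : s => w.1.1.1) (fun w => w.1.1.2) := by
  ext u v
  simp [arcLineGraph_adj, shiftGraph, Subtype.val_injective.ne_iff]

theorem sdNum_shiftGraph_le_two (n : ℕ) : sdNum (shiftGraph n) ≤ 2 := by
  refine sdNum_le_of_forall_exists_sdAt_le _ 2 fun s hs => ?_
  have : Nontrivial s := Set.nontrivial_coe_sort.2 (Set.one_lt_ncard_iff_nontrivial.1 hs)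
  rw [induce_shiftGraph_eq_arcLineGraph]
  exact exists_sdAt_arcLineGraph_le_two fun w => w.1.2
end

section
/- For all integers a, b ≥ 3, the symmetric difference of the a × b rook graph equals 2(min(a,b) − 1). -/
open scoped symmDiff

/-- The `a × b` rook graph: distinct vertices `(i, j)` and `(k, ℓ)` are adjacent
whenever `i = k` or `j = ℓ`. -/
def rookGraph (a b : ℕ) : SimpleGraph (Fin a × Fin b) where
  Adj p q := p ≠ q ∧ (p.1 = q.1 ∨ p.2 = q.2)
  symm := ⟨by rintro p q ⟨h1, h2⟩; exact ⟨h1.symm, h2.imp Eq.symm Eq.symm⟩⟩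
  loopless := ⟨fun p h => h.1 rfl⟩

/-!
Call the first coordinate the row. In the whole rook graph two vertices in a common row are
separated exactly by the other vertices of their two columns, `2 (a - 1)` of them; a common
column gives `2 (b - 1)` and otherwise `2 (a - 2) + 2 (b - 2)`. For `a ≤ b` and `b ≥ 3` all of
these are at least `2 (a - 1)`, so the whole graph witnesses the lower bound.

Conversely, let `s` induce a subgraph. If two vertices of `s` share a row, passing to `s` only
shrinks their separating set, so their value is at most `2 (a - 1)`. Otherwise all rows in `s`
are distinct, every vertex has at most `a - 1` neighbours in `s` (all in its own column), and
any pair has value at most the sum of their degrees. Transposition handles `a > b`.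
-/

lemma Set.exists_ne_of_two_le_ncard {V : Type*} [Finite V] {s : Set V} (hs : 2 ≤ s.ncard) :
    ∃ u v : s, u ≠ v :=
  have : Nontrivial s := Set.nontrivial_coe_sort.mpr (Set.one_lt_ncard_iff_nontrivial.mp hs)
  exists_pair_ne s

namespace SimpleGraph

variable {V W : Type*}

/-- `sdNum G` unfolds to the supremum of `minSdAt (G.induce s)` over all `s` with `2 ≤ s.ncard`. -/
noncomputable def minSdAt (H : SimpleGraph V) : ℕ :=
  sInf {m | ∃ u v : V, u ≠ v ∧ m = sdAt H u v}

section Iso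

variable {G : SimpleGraph V} {G' : SimpleGraph W}

lemma sdAt_iso (e : G ≃g G') (u v : V) : sdAt G' (e u) (e v) = sdAt G u v := by
  rw [sdAt, sdAt, ← Set.ncard_image_of_injective _ e.injective, Set.image_symmDiff e.injective,
    Set.image_sdiff e.injective, Set.image_sdiff e.injective, Set.image_singleton,
    Set.image_singleton, e.image_neighborSet, e.image_neighborSet]

lemma minSdAt_iso (e : G ≃g G') : minSdAt G = minSdAt G' := by
  refine congrArg sInf (Set.ext fun m => ⟨?_, ?_⟩)
  · rintro ⟨u, v, huv, rfl⟩
    exact ⟨e u, e v, e.injective.ne huv, (sdAt_iso e u v).symm⟩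
  · rintro ⟨u, v, huv, rfl⟩
    obtain ⟨u, rfl⟩ := e.surjective u
    obtain ⟨v, rfl⟩ := e.surjective v
    exact ⟨u, v, ne_of_apply_ne e huv, sdAt_iso e u v⟩

lemma sdNum_iso [Fintype V] [Fintype W] (e : G ≃g G') : sdNum G = sdNum G' := by
  refine congrArg sSup (Set.ext fun k => ⟨?_, ?_⟩)
  · rintro ⟨s, hs, rfl⟩
    refine ⟨e '' s, by rwa [Set.ncard_image_of_injective _ e.injective], ?_⟩
    exact minSdAt_iso (e.induce e.injective.injOn.bijOn_image)
  · rintro ⟨t, ht, rfl⟩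
    refine ⟨e.symm '' t, by rwa [Set.ncard_image_of_injective _ e.symm.injective], ?_⟩
    exact minSdAt_iso (e.symm.induce e.symm.injective.injOn.bijOn_image)

end Iso

variable {G : SimpleGraph V}

lemma sdAt_induce_le [Finite V] (s : Set V) (u v : s) : sdAt (G.induce s) u v ≤ sdAt G u v := by
  refine Set.ncard_le_ncard_of_injOn Subtype.val ?_ Subtype.val_injective.injOn
  simp [Set.mem_symmDiff, neighborSet_induce, Subtype.ext_iff]

lemma sdAt_le_ncard_neighborSet_add [Finite V] (u v : V) :
    sdAt G u v ≤ (G.neighborSet u).ncard + (G.neighborSet v).ncard :=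
  calc sdAt G u v ≤ (G.neighborSet u \ {v} ∪ G.neighborSet v \ {u}).ncard :=
        Set.ncard_le_ncard Set.symmDiff_subset_union
    _ ≤ (G.neighborSet u \ {v}).ncard + (G.neighborSet v \ {u}).ncard := Set.ncard_union_le _ _
    _ ≤ _ := add_le_add (Set.ncard_le_ncard Set.sdiff_subset) (Set.ncard_le_ncard Set.sdiff_subset)

variable [Fintype V]

lemma sdNum_le {k : ℕ}
    (h : ∀ s : Set V, 2 ≤ s.ncard → ∃ u v : s, u ≠ v ∧ sdAt (G.induce s) u v ≤ k) :
    sdNum G ≤ k := by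
  refine csSup_le' ?_
  rintro _ ⟨s, hs, rfl⟩
  obtain ⟨u, v, huv, hle⟩ := h s hs
  exact le_trans (Nat.sInf_le ⟨u, v, huv, rfl⟩) hle

lemma le_sdNum {k : ℕ} (s : Set V) (hs : 2 ≤ s.ncard)
    (h : ∀ u v : s, u ≠ v → k ≤ sdAt (G.induce s) u v) : k ≤ sdNum G := by
  have hbdd : BddAbove {n | ∃ s : Set V, 2 ≤ s.ncard ∧ n = minSdAt (G.induce s)} :=
    ((Set.finite_range fun s : Set V => minSdAt (G.induce s)).subset
      (by rintro _ ⟨s, -, rfl⟩; exact ⟨s, rfl⟩)).bddAbove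
  obtain ⟨u, v, huv⟩ := Set.exists_ne_of_two_le_ncard hs
  refine le_csSup_of_le (b := minSdAt (G.induce s)) hbdd ⟨s, hs, rfl⟩ ?_
  refine le_csInf ⟨_, u, v, huv, rfl⟩ ?_
  rintro _ ⟨u, v, huv, rfl⟩
  exact h u v huv

end SimpleGraph

open SimpleGraph

section RookGraph

variable {a b : ℕ}

def rookGraphSwap (a b : ℕ) : rookGraph a b ≃g rookGraph b a where
  toEquiv := Equiv.prodComm (Fin a) (Fin b)
  map_rel_iff' := by simp [rookGraph, or_comm]

lemma sdAt_rookGraph_of_fst_eq (i : Fin a) {j j' : Fin b} (h : j ≠ j') :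
    sdAt (rookGraph a b) (i, j) (i, j') = 2 * (a - 1) := by
  have hset : ((rookGraph a b).neighborSet (i, j) \ {(i, j')}) ∆
      ((rookGraph a b).neighborSet (i, j') \ {(i, j)}) = ({i}ᶜ ×ˢ {j, j'} : Finset _) := by
    ext ⟨r, c⟩
    simp only [Set.mem_symmDiff, Set.mem_sdiff, mem_neighborSet, Set.mem_singleton_iff, rookGraph,
      Finset.coe_product, Set.mem_prod, Finset.mem_coe, Finset.mem_compl, Finset.mem_singleton,
      Finset.mem_insert, Prod.ext_iff, ne_eq]
    grind
  rw [sdAt, hset, Set.ncard_coe_finset, Finset.card_product, Finset.card_compl,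
    Finset.card_singleton, Fintype.card_fin, Finset.card_pair h, mul_comm]

lemma sdAt_rookGraph_of_snd_eq {i i' : Fin a} (j : Fin b) (h : i ≠ i') :
    sdAt (rookGraph a b) (i, j) (i', j) = 2 * (b - 1) := by
  rw [← sdAt_iso (rookGraphSwap a b)]
  exact sdAt_rookGraph_of_fst_eq j h

lemma sdAt_rookGraph_of_ne_of_ne {i i' : Fin a} {j j' : Fin b} (hi : i ≠ i') (hj : j ≠ j') :
    sdAt (rookGraph a b) (i, j) (i', j') = 2 * (a - 2) + 2 * (b - 2) := by
  have hset : ((rookGraph a b).neighborSet (i, j) \ {(i', j')}) ∆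
      ((rookGraph a b).neighborSet (i', j') \ {(i, j)}) =
      ({i, i'}ᶜ ×ˢ {j, j'} ∪ {i, i'} ×ˢ {j, j'}ᶜ : Finset _) := by
    ext ⟨r, c⟩
    simp only [Set.mem_symmDiff, Set.mem_sdiff, mem_neighborSet, Set.mem_singleton_iff, rookGraph,
      Finset.coe_union, Set.mem_union, Finset.coe_product, Set.mem_prod, Finset.mem_coe,
      Finset.mem_compl, Finset.mem_singleton, Finset.mem_insert, Prod.ext_iff, ne_eq]
    grind
  rw [sdAt, hset, Set.ncard_coe_finset,
    Finset.card_union_of_disjoint (Finset.disjoint_product.mpr (Or.inl disjoint_compl_left)),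
    Finset.card_product, Finset.card_product, Finset.card_compl, Finset.card_compl,
    Fintype.card_fin, Fintype.card_fin, Finset.card_pair hi, Finset.card_pair hj,
    mul_comm, mul_comm 2]

lemma two_mul_pred_le_sdAt_rookGraph (hab : a ≤ b) (hb : 3 ≤ b) {u v : Fin a × Fin b}
    (huv : u ≠ v) : 2 * (a - 1) ≤ sdAt (rookGraph a b) u v := by
  obtain ⟨i, j⟩ := u
  obtain ⟨i', j'⟩ := v
  by_cases hi : i = i'
  · subst hi
    rw [sdAt_rookGraph_of_fst_eq i (by rintro rfl; exact huv rfl)]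
  by_cases hj : j = j'
  · subst hj
    rw [sdAt_rookGraph_of_snd_eq j hi]
    omega
  rw [sdAt_rookGraph_of_ne_of_ne hi hj]
  omega

lemma ncard_neighborSet_induce_rookGraph_le {s : Set (Fin a × Fin b)} (hs : s.InjOn Prod.fst)
    (u : s) : (((rookGraph a b).induce s).neighborSet u).ncard ≤ a - 1 :=
  calc _ ≤ ({u.1.1}ᶜ : Set (Fin a)).ncard := by
        refine Set.ncard_le_ncard_of_injOn (fun w => w.1.1) ?_
          (fun w _ w' _ h => Subtype.ext (hs w.2 w'.2 h))
        intro w (hw : ((rookGraph a b).induce s).Adj u w) h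
        exact hw.ne (Subtype.ext (hs u.2 w.2 h.symm))
    _ = a - 1 := by rw [Set.ncard_compl, Set.ncard_singleton, Nat.card_fin]

theorem sdNum_rookGraph_le : sdNum (rookGraph a b) ≤ 2 * (a - 1) := by
  refine sdNum_le fun s hs => ?_
  by_cases hinj : s.InjOn Prod.fst
  · obtain ⟨u, v, huv⟩ := Set.exists_ne_of_two_le_ncard hs
    refine ⟨u, v, huv, (sdAt_le_ncard_neighborSet_add u v).trans ?_⟩
    have hu := ncard_neighborSet_induce_rookGraph_le hinj u
    have hv := ncard_neighborSet_induce_rookGraph_le hinj v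
    omega
  · obtain ⟨⟨i, j⟩, hu, ⟨i', j'⟩, hv, hi, huv⟩ : ∃ u ∈ s, ∃ v ∈ s, u.1 = v.1 ∧ u ≠ v := by
      simpa [Set.InjOn] using hinj
    obtain rfl : i = i' := hi
    refine ⟨⟨_, hu⟩, ⟨_, hv⟩, by simpa using huv, (sdAt_induce_le s _ _).trans ?_⟩
    exact (sdAt_rookGraph_of_fst_eq i (by rintro rfl; exact huv rfl)).le

theorem le_sdNum_rookGraph (ha : 1 ≤ a) (hab : a ≤ b) (hb : 3 ≤ b) :
    2 * (a - 1) ≤ sdNum (rookGraph a b) := by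
  refine le_sdNum Set.univ ?_ fun u v huv => ?_
  · rw [Set.ncard_univ, Nat.card_prod, Nat.card_fin, Nat.card_fin]
    nlinarith
  · rw [← sdAt_iso (rookGraph a b).induceUnivIso]
    exact two_mul_pred_le_sdAt_rookGraph hab hb (by simpa [Subtype.ext_iff] using huv)

end RookGraph

theorem sdNum_rookGraph (a b : ℕ) (ha : 3 ≤ a) (hb : 3 ≤ b) :
    sdNum (rookGraph a b) = 2 * (min a b - 1) := by
  rcases le_total a b with hab | hba
  · rw [min_eq_left hab]
    exact sdNum_rookGraph_le.antisymm (le_sdNum_rookGraph (by omega) hab hb)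
  · rw [min_eq_right hba, sdNum_iso (rookGraphSwap a b)]
    exact sdNum_rookGraph_le.antisymm (le_sdNum_rookGraph (by omega) hba ha)
end
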